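/- Let 0 < μ < L and 0 ≤ d ≤ 2μ(L − μ)/L, and set ξ₁ = μ − d(L − μ)/(2(L − μ) − d) and ξ₂ = μ + dμ/(2μ − d). Then for ξ ∈ [0, L], the supremum over P ∈ P(μ,d,L) of ∫ min{ξ, x} dP(x) equals: ξ, if ξ ∈ [0, ξ₁]; μ − d(L − ξ)/(2(L − μ)), if ξ ∈ [ξ₁, μ]; ξ − dξ/(2μ), if ξ ∈ [μ, ξ₂]; and μ, if ξ ∈ [ξ₂, L]. Moreover, this supremum is attained by some P ∈ P(μ,d,L). -/

import Mathlib

open MeasureTheory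

/-!
The suprema are attained by two-point measures and certified by LP duality: if
`min ξ x ≤ v + a (x - μ) + b (|x - μ| - d)` on `[0, L]`, integrating against any `P ∈ P(μ,d,L)`
gives `∫ min ξ x dP ≤ v`. For `ξ ≤ μ` the extremal measure sits on `{ξ₁, L}` and for `ξ ≥ μ` on
`{0, ξ₂}` (`ξ₁ = lowerBreak μ d L`, `ξ₂ = upperBreak μ d`); in each of the four regimes the majorant
touches `min ξ ·` at both atoms.
-/

/-- `P(μ,d,L)`: Borel probability measures supported in `[0,L]` with mean `μ`
and mean absolute deviation `d`. -/
def PmdL (μ d L : ℝ) : Set (Measure ℝ) :=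
  {P | IsProbabilityMeasure P ∧ P (Set.Icc 0 L) = 1 ∧
       (∫ x, x ∂P) = μ ∧ (∫ x, |x - μ| ∂P) = d}

noncomputable def twoPoint (p a b : ℝ) : Measure ℝ :=
  ENNReal.ofReal (1 - p) • Measure.dirac a + ENNReal.ofReal p • Measure.dirac b

section TwoPoint

variable {p : ℝ} (a b : ℝ)

lemma twoPoint_apply (hp : p ∈ Set.Icc 0 1) {s : Set ℝ} (ha : a ∈ s) (hb : b ∈ s) :
    twoPoint p a b s = 1 := by
  simp only [twoPoint, Measure.add_apply, Measure.smul_apply, Measure.dirac_apply_of_mem ha,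
    Measure.dirac_apply_of_mem hb, smul_eq_mul, mul_one]
  rw [← ENNReal.ofReal_add (by linarith [hp.2]) hp.1]
  norm_num

lemma isProbabilityMeasure_twoPoint (hp : p ∈ Set.Icc 0 1) :
    IsProbabilityMeasure (twoPoint p a b) :=
  ⟨twoPoint_apply a b hp (Set.mem_univ a) (Set.mem_univ b)⟩

lemma integral_twoPoint (hp : p ∈ Set.Icc 0 1) (f : ℝ → ℝ) :
    ∫ x, f x ∂twoPoint p a b = (1 - p) * f a + p * f b := by
  have hint (c : ℝ) : Integrable f (Measure.dirac c) := integrable_dirac enorm_lt_top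
  rw [twoPoint, integral_add_measure ((hint a).smul_measure ENNReal.ofReal_ne_top)
      ((hint b).smul_measure ENNReal.ofReal_ne_top), integral_smul_measure,
    integral_smul_measure, integral_dirac, integral_dirac,
    ENNReal.toReal_ofReal (by linarith [hp.2]), ENNReal.toReal_ofReal hp.1, smul_eq_mul,
    smul_eq_mul]

lemma twoPoint_mem_PmdL {μ d L : ℝ} (hp : p ∈ Set.Icc 0 1) (ha : a ∈ Set.Icc 0 L)
    (hb : b ∈ Set.Icc 0 L) (hmean : (1 - p) * a + p * b = μ)
    (hmad : (1 - p) * |a - μ| + p * |b - μ| = d) :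
    twoPoint p a b ∈ PmdL μ d L :=
  ⟨isProbabilityMeasure_twoPoint a b hp, twoPoint_apply a b hp ha hb,
    (integral_twoPoint a b hp _).trans hmean,
    (integral_twoPoint a b hp _).trans hmad⟩

end TwoPoint

namespace PmdL

variable {μ d L : ℝ} {P : Measure ℝ}

lemma restrict_Icc (hP : P ∈ PmdL μ d L) : P.restrict (Set.Icc 0 L) = P := by
  obtain ⟨hprob, hsupp, -, -⟩ := hP
  refine Measure.restrict_eq_self_of_ae_mem ?_
  rw [ae_mem_iff_measure_eq measurableSet_Icc.nullMeasurableSet, hsupp, measure_univ]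

lemma integrable_of_continuous (hP : P ∈ PmdL μ d L) {f : ℝ → ℝ} (hf : Continuous f) :
    Integrable f P := by
  have := hP.1
  simpa only [IntegrableOn, restrict_Icc hP] using hf.integrableOn_Icc (μ := P) (a := 0) (b := L)

lemma integral_le_of_le_affine (hP : P ∈ PmdL μ d L) {f : ℝ → ℝ} (hf : Continuous f)
    {v a b : ℝ} (hle : ∀ x ∈ Set.Icc 0 L, f x ≤ v + a * (x - μ) + b * (|x - μ| - d)) :
    ∫ x, f x ∂P ≤ v := by
  have := hP.1
  have hg : Continuous fun x : ℝ => v + a * (x - μ) + b * (|x - μ| - d) := by fun_prop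
  have hmajor : ∀ᵐ x ∂P, f x ≤ v + a * (x - μ) + b * (|x - μ| - d) := by
    rw [← restrict_Icc hP]
    exact (ae_restrict_iff' measurableSet_Icc).2 (Filter.Eventually.of_forall hle)
  have hcentered : Integrable (fun x => x - μ) P := integrable_of_continuous hP (by fun_prop)
  have habs : Integrable (fun x => |x - μ| - d) P := integrable_of_continuous hP (by fun_prop)
  have hmean : ∫ x, x - μ ∂P = 0 := by
    rw [integral_sub (f := fun x => x) (integrable_of_continuous hP continuous_id)
      (integrable_const μ), hP.2.2.1]
    simp
  have hmad : ∫ x, |x - μ| - d ∂P = 0 := by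
    rw [integral_sub (integrable_of_continuous hP (by fun_prop)) (integrable_const d), hP.2.2.2]
    simp
  calc ∫ x, f x ∂P ≤ ∫ x, v + a * (x - μ) + b * (|x - μ| - d) ∂P :=
        integral_mono_ae (integrable_of_continuous hP hf) (integrable_of_continuous hP hg) hmajor
    _ = v := by
      rw [integral_add (f := fun x => v + a * (x - μ))
          ((integrable_const v).add (hcentered.const_mul a)) (habs.const_mul b),
        integral_add (integrable_const v) (hcentered.const_mul a), integral_const_mul,
        integral_const_mul, hmean, hmad]
      simp

lemma isGreatest_integral {f : ℝ → ℝ} (hf : Continuous f) {P₀ : Measure ℝ}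
    (hP₀ : P₀ ∈ PmdL μ d L) {v : ℝ} (hv : ∫ x, f x ∂P₀ = v) (a b : ℝ)
    (hle : ∀ x ∈ Set.Icc 0 L, f x ≤ v + a * (x - μ) + b * (|x - μ| - d)) :
    IsGreatest ((fun P => ∫ x, f x ∂P) '' PmdL μ d L) v :=
  ⟨⟨P₀, hP₀, hv⟩, by rintro _ ⟨P, hP, rfl⟩; exact integral_le_of_le_affine hP hf hle⟩

end PmdL

noncomputable def lowerBreak (μ d L : ℝ) : ℝ := μ - d * (L - μ) / (2 * (L - μ) - d)

noncomputable def upperBreak (μ d : ℝ) : ℝ := μ + d * μ / (2 * μ - d)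

section Extremal

variable {μ d L : ℝ}

lemma mad_lt_of_mul_le (hμ : 0 < μ) (hμL : μ < L) (hd : d * L ≤ 2 * μ * (L - μ)) :
    d < 2 * (L - μ) ∧ d < 2 * μ :=
  ⟨by nlinarith, by nlinarith⟩

lemma lowerBreak_mem_Icc (hμ : 0 < μ) (hμL : μ < L) (hd₀ : 0 ≤ d)
    (hd : d * L ≤ 2 * μ * (L - μ)) : lowerBreak μ d L ∈ Set.Icc 0 μ := by
  have hden : 0 < 2 * (L - μ) - d := by linarith [(mad_lt_of_mul_le hμ hμL hd).1]
  refine ⟨?_, ?_⟩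
  · rw [lowerBreak, sub_nonneg, div_le_iff₀ hden]
    nlinarith
  · have : 0 ≤ d * (L - μ) / (2 * (L - μ) - d) := div_nonneg (by nlinarith) hden.le
    rw [lowerBreak]
    linarith

lemma upperBreak_mem_Icc (hμ : 0 < μ) (hμL : μ < L) (hd₀ : 0 ≤ d)
    (hd : d * L ≤ 2 * μ * (L - μ)) : upperBreak μ d ∈ Set.Icc μ L := by
  have hden : 0 < 2 * μ - d := by linarith [(mad_lt_of_mul_le hμ hμL hd).2]
  refine ⟨?_, ?_⟩
  · have : 0 ≤ d * μ / (2 * μ - d) := div_nonneg (by nlinarith) hden.le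
    rw [upperBreak]
    linarith
  · rw [upperBreak, ← le_sub_iff_add_le', div_le_iff₀ hden]
    nlinarith

lemma lowerWeight_mem_Icc (hμ : 0 < μ) (hμL : μ < L) (hd₀ : 0 ≤ d)
    (hd : d * L ≤ 2 * μ * (L - μ)) : d / (2 * (L - μ)) ∈ Set.Icc 0 1 :=
  ⟨div_nonneg hd₀ (by linarith),
    (div_le_one (by linarith)).2 (mad_lt_of_mul_le hμ hμL hd).1.le⟩

lemma upperWeight_mem_Icc (hμ : 0 < μ) (hμL : μ < L) (hd₀ : 0 ≤ d)
    (hd : d * L ≤ 2 * μ * (L - μ)) : 1 - d / (2 * μ) ∈ Set.Icc 0 1 :=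
  ⟨sub_nonneg.2 ((div_le_one (by linarith)).2 (mad_lt_of_mul_le hμ hμL hd).2.le),
    sub_le_self _ (div_nonneg hd₀ (by linarith))⟩

lemma twoPoint_lowerBreak_mem_PmdL (hμ : 0 < μ) (hμL : μ < L) (hd₀ : 0 ≤ d)
    (hd : d * L ≤ 2 * μ * (L - μ)) :
    twoPoint (d / (2 * (L - μ))) (lowerBreak μ d L) L ∈ PmdL μ d L := by
  obtain ⟨hξ₁0, hξ₁μ⟩ := lowerBreak_mem_Icc hμ hμL hd₀ hd
  have hden : 2 * (L - μ) - d ≠ 0 := by linarith [(mad_lt_of_mul_le hμ hμL hd).1]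
  have hLμ : L - μ ≠ 0 := by linarith
  refine twoPoint_mem_PmdL _ _ (lowerWeight_mem_Icc hμ hμL hd₀ hd) ⟨hξ₁0, by linarith⟩
    ⟨by linarith, le_rfl⟩ ?_ ?_
  · rw [lowerBreak]
    field_simp
    ring
  · rw [abs_of_nonpos (by linarith), abs_of_nonneg (by linarith), lowerBreak]
    field_simp
    ring

lemma twoPoint_upperBreak_mem_PmdL (hμ : 0 < μ) (hμL : μ < L) (hd₀ : 0 ≤ d)
    (hd : d * L ≤ 2 * μ * (L - μ)) :
    twoPoint (1 - d / (2 * μ)) 0 (upperBreak μ d) ∈ PmdL μ d L := by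
  obtain ⟨hξ₂μ, hξ₂L⟩ := upperBreak_mem_Icc hμ hμL hd₀ hd
  have hden : 2 * μ - d ≠ 0 := by linarith [(mad_lt_of_mul_le hμ hμL hd).2]
  refine twoPoint_mem_PmdL _ _ (upperWeight_mem_Icc hμ hμL hd₀ hd) ⟨le_rfl, by linarith⟩
    ⟨by linarith, hξ₂L⟩ ?_ ?_
  · rw [upperBreak]
    field_simp
    ring
  · rw [abs_of_nonpos (by linarith), abs_of_nonneg (by linarith), upperBreak]
    field_simp
    ring

end Extremal

section Regimes

variable {μ d L ξ : ℝ}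

lemma isGreatest_integral_min_of_le_lowerBreak (hμ : 0 < μ) (hμL : μ < L) (hd₀ : 0 ≤ d)
    (hd : d * L ≤ 2 * μ * (L - μ)) (hξ : ξ ≤ lowerBreak μ d L) :
    IsGreatest ((fun P => ∫ x, min ξ x ∂P) '' PmdL μ d L) ξ := by
  have hξμ := hξ.trans (lowerBreak_mem_Icc hμ hμL hd₀ hd).2
  refine PmdL.isGreatest_integral (by fun_prop) (twoPoint_lowerBreak_mem_PmdL hμ hμL hd₀ hd)
    ?_ 0 0 fun x _ => by simp
  rw [integral_twoPoint _ _ (lowerWeight_mem_Icc hμ hμL hd₀ hd), min_eq_left hξ,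
    min_eq_left (by linarith)]
  ring

lemma isGreatest_integral_min_of_lowerBreak_le_of_le (hμ : 0 < μ) (hμL : μ < L) (hd₀ : 0 ≤ d)
    (hd : d * L ≤ 2 * μ * (L - μ)) (hξ₁ : lowerBreak μ d L ≤ ξ) (hξ : ξ ≤ μ) :
    IsGreatest ((fun P => ∫ x, min ξ x ∂P) '' PmdL μ d L) (μ - d * (L - ξ) / (2 * (L - μ))) := by
  have hLμ : 0 < L - μ := by linarith
  have hden : 2 * (L - μ) - d ≠ 0 := by linarith [(mad_lt_of_mul_le hμ hμL hd).1]
  refine PmdL.isGreatest_integral (by fun_prop) (twoPoint_lowerBreak_mem_PmdL hμ hμL hd₀ hd) ?_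
    ((L + ξ - 2 * μ) / (2 * (L - μ))) ((ξ - L) / (2 * (L - μ))) fun x hx => ?_
  · rw [integral_twoPoint _ _ (lowerWeight_mem_Icc hμ hμL hd₀ hd), min_eq_right hξ₁,
      min_eq_left (by linarith), lowerBreak]
    field_simp
    ring
  rcases le_total x μ with hxμ | hμx
  · have hmaj : μ - d * (L - ξ) / (2 * (L - μ)) + (L + ξ - 2 * μ) / (2 * (L - μ)) * (x - μ) +
        (ξ - L) / (2 * (L - μ)) * (|x - μ| - d) = x := by
      rw [abs_of_nonpos (by linarith)]
      field_simp
      ring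
    rw [hmaj]
    exact min_le_right ξ x
  · have hmaj : μ - d * (L - ξ) / (2 * (L - μ)) + (L + ξ - 2 * μ) / (2 * (L - μ)) * (x - μ) +
        (ξ - L) / (2 * (L - μ)) * (|x - μ| - d) = ξ + (L - x) * (μ - ξ) / (L - μ) := by
      rw [abs_of_nonneg (by linarith)]
      field_simp
      ring
    rw [hmaj]
    have : 0 ≤ (L - x) * (μ - ξ) / (L - μ) :=
      div_nonneg (mul_nonneg (by linarith [hx.2]) (by linarith)) hLμ.le
    linarith [min_le_left ξ x]

lemma isGreatest_integral_min_of_le_of_le_upperBreak (hμ : 0 < μ) (hμL : μ < L) (hd₀ : 0 ≤ d)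
    (hd : d * L ≤ 2 * μ * (L - μ)) (hξ : μ ≤ ξ) (hξ₂ : ξ ≤ upperBreak μ d) :
    IsGreatest ((fun P => ∫ x, min ξ x ∂P) '' PmdL μ d L) (ξ - d * ξ / (2 * μ)) := by
  refine PmdL.isGreatest_integral (by fun_prop) (twoPoint_upperBreak_mem_PmdL hμ hμL hd₀ hd) ?_
    (ξ / (2 * μ)) (-(ξ / (2 * μ))) fun x hx => ?_
  · rw [integral_twoPoint _ _ (upperWeight_mem_Icc hμ hμL hd₀ hd), min_eq_right (by linarith),
      min_eq_left hξ₂]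
    ring
  rcases le_total x μ with hxμ | hμx
  · have hmaj : ξ - d * ξ / (2 * μ) + ξ / (2 * μ) * (x - μ) + -(ξ / (2 * μ)) * (|x - μ| - d) =
        x + x * (ξ - μ) / μ := by
      rw [abs_of_nonpos (by linarith)]
      field_simp
      ring
    rw [hmaj]
    have : 0 ≤ x * (ξ - μ) / μ := div_nonneg (mul_nonneg hx.1 (by linarith)) hμ.le
    linarith [min_le_right ξ x]
  · have hmaj : ξ - d * ξ / (2 * μ) + ξ / (2 * μ) * (x - μ) + -(ξ / (2 * μ)) * (|x - μ| - d) =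
        ξ := by
      rw [abs_of_nonneg (by linarith)]
      field_simp
      ring
    rw [hmaj]
    exact min_le_left ξ x

lemma isGreatest_integral_min_of_upperBreak_le (hμ : 0 < μ) (hμL : μ < L) (hd₀ : 0 ≤ d)
    (hd : d * L ≤ 2 * μ * (L - μ)) (hξ : upperBreak μ d ≤ ξ) :
    IsGreatest ((fun P => ∫ x, min ξ x ∂P) '' PmdL μ d L) μ := by
  have hμξ := (upperBreak_mem_Icc hμ hμL hd₀ hd).1.trans hξ
  have hden : 2 * μ - d ≠ 0 := by linarith [(mad_lt_of_mul_le hμ hμL hd).2]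
  refine PmdL.isGreatest_integral (by fun_prop) (twoPoint_upperBreak_mem_PmdL hμ hμL hd₀ hd) ?_
    1 0 fun x _ => by simp
  rw [integral_twoPoint _ _ (upperWeight_mem_Icc hμ hμL hd₀ hd), min_eq_right (by linarith),
    min_eq_right hξ, upperBreak]
  field_simp
  ring

end Regimes

theorem stmt13_general (μ d L ξ : ℝ) (hμ : 0 < μ) (hμL : μ < L) (hd0 : 0 ≤ d)
    (hd : d ≤ 2 * μ * (L - μ) / L) :
    (ξ ≤ μ - d * (L - μ) / (2 * (L - μ) - d) →
      IsGreatest ((fun P => ∫ x, min ξ x ∂P) '' PmdL μ d L) ξ) ∧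
    (μ - d * (L - μ) / (2 * (L - μ) - d) ≤ ξ → ξ ≤ μ →
      IsGreatest ((fun P => ∫ x, min ξ x ∂P) '' PmdL μ d L)
        (μ - d * (L - ξ) / (2 * (L - μ)))) ∧
    (μ ≤ ξ → ξ ≤ μ + d * μ / (2 * μ - d) →
      IsGreatest ((fun P => ∫ x, min ξ x ∂P) '' PmdL μ d L)
        (ξ - d * ξ / (2 * μ))) ∧
    (μ + d * μ / (2 * μ - d) ≤ ξ →
      IsGreatest ((fun P => ∫ x, min ξ x ∂P) '' PmdL μ d L) μ) := by
  have hdL : d * L ≤ 2 * μ * (L - μ) := (le_div_iff₀ (hμ.trans hμL)).1 hd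
  exact ⟨isGreatest_integral_min_of_le_lowerBreak hμ hμL hd0 hdL,
    isGreatest_integral_min_of_lowerBreak_le_of_le hμ hμL hd0 hdL,
    isGreatest_integral_min_of_le_of_le_upperBreak hμ hμL hd0 hdL,
    isGreatest_integral_min_of_upperBreak_le hμ hμL hd0 hdL⟩

theorem stmt13 (μ d L ξ : ℝ) (hμ : 0 < μ) (hμL : μ < L) (hd0 : 0 ≤ d)
    (hd : d ≤ 2 * μ * (L - μ) / L) (hξ0 : 0 ≤ ξ) (hξL : ξ ≤ L) :
    (ξ ≤ μ - d * (L - μ) / (2 * (L - μ) - d) →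
      IsGreatest ((fun P => ∫ x, min ξ x ∂P) '' PmdL μ d L) ξ) ∧
    (μ - d * (L - μ) / (2 * (L - μ) - d) ≤ ξ → ξ ≤ μ →
      IsGreatest ((fun P => ∫ x, min ξ x ∂P) '' PmdL μ d L)
        (μ - d * (L - ξ) / (2 * (L - μ)))) ∧
    (μ ≤ ξ → ξ ≤ μ + d * μ / (2 * μ - d) →
      IsGreatest ((fun P => ∫ x, min ξ x ∂P) '' PmdL μ d L)
        (ξ - d * ξ / (2 * μ))) ∧
    (μ + d * μ / (2 * μ - d) ≤ ξ →
      IsGreatest ((fun P => ∫ x, min ξ x ∂P) '' PmdL μ d L) μ) :=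
  stmt13_general μ d L ξ hμ hμL hd0 hd
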